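/- arXiv:2312.05064 — 3 statements merged into one kernel-verified Lean document; each statement's English description precedes it below -/
import Mathlib

section
/- Let P be a bounded closed subset of ℝⁿ with the origin in its interior, v ∈ ℝⁿ with ∫_P (x·v) dλ > 0, and H a closed half-space with outward normal v such that ∫_{P∩H} (x·v) dλ = 0. If Q ⊆ P is closed with ∫_Q (x·v) dλ = 0 and vol(Q) = vol(P∩H), then Q and P∩H agree up to a Lebesgue-null set. -/
/-!
Bathtub principle: among subsets of `P` of a given measure, the sublevel truncation
`A = P ∩ {f ≤ c}` has the smallest integral of `f`. If `Q ⊆ P` has the measure of `A`, then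
`Q \ A` and `A \ Q` have equal measure, `f > c` on the first and `f ≤ c` on the second, so
`∫_Q f ≤ ∫_A f` forces `Q \ A`, hence also `A \ Q`, to be null. Here `f = ⟪·, v⟫` and both
integrals vanish.
-/

open MeasureTheory Set
open scoped ENNReal

namespace MeasureTheory

variable {α : Type*} [MeasurableSpace α] {μ : Measure α} {f : α → ℝ} {c : ℝ} {s t : Set α}

lemma setIntegral_le_measureReal_mul (ht : MeasurableSet t) (hμt : μ t ≠ ∞)
    (hft : IntegrableOn f t μ) (hle : ∀ x ∈ t, f x ≤ c) :
    ∫ x in t, f x ∂μ ≤ μ.real t * c := by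
  calc ∫ x in t, f x ∂μ ≤ ∫ _ in t, c ∂μ :=
        setIntegral_mono_on hft (integrableOn_const hμt) ht hle
    _ = μ.real t * c := by rw [setIntegral_const, smul_eq_mul]

lemma measureReal_mul_lt_setIntegral (hs : MeasurableSet s) (hμs : μ s ≠ ∞) (hμs₀ : μ s ≠ 0)
    (hfs : IntegrableOn f s μ) (hlt : ∀ x ∈ s, c < f x) :
    μ.real s * c < ∫ x in s, f x ∂μ := by
  have hc : IntegrableOn (fun _ ↦ c) s μ := integrableOn_const hμs
  have hsupp : s ⊆ Function.support fun x ↦ f x - c := fun x hx ↦ (sub_pos.2 (hlt x hx)).ne'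
  have hpos : 0 < ∫ x in s, (f x - c) ∂μ := by
    rw [setIntegral_pos_iff_support_of_nonneg_ae
      (ae_restrict_of_forall_mem hs fun x hx ↦ sub_nonneg.2 (hlt x hx).le) (hfs.sub hc),
      inter_eq_self_of_subset_right hsupp]
    exact pos_iff_ne_zero.2 hμs₀
  rwa [integral_sub hfs hc, setIntegral_const, smul_eq_mul, sub_pos] at hpos

lemma measure_eq_zero_of_setIntegral_le_of_lt_of_le (hs : MeasurableSet s)
    (ht : MeasurableSet t) (hμ : μ s = μ t) (hμt : μ t ≠ ∞) (hfs : IntegrableOn f s μ)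
    (hft : IntegrableOn f t μ) (hlt : ∀ x ∈ s, c < f x) (hle : ∀ x ∈ t, f x ≤ c)
    (hint : ∫ x in s, f x ∂μ ≤ ∫ x in t, f x ∂μ) : μ s = 0 := by
  by_contra hμs₀
  have hreal : μ.real s = μ.real t := by simp only [measureReal_def, hμ]
  have hs_gt := measureReal_mul_lt_setIntegral hs (hμ ▸ hμt) hμs₀ hfs hlt
  have ht_le := setIntegral_le_measureReal_mul ht hμt hft hle
  rw [hreal] at hs_gt
  linarith

theorem measure_symmDiff_inter_sublevel_eq_zero {P Q : Set α} (hP : MeasurableSet P)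
    (hQ : MeasurableSet Q) (hQP : Q ⊆ P) (hf : Measurable f) (hfP : IntegrableOn f P μ)
    (hμP : μ P ≠ ∞) (hvol : μ Q = μ (P ∩ {x | f x ≤ c}))
    (hint : ∫ x in Q, f x ∂μ ≤ ∫ x in P ∩ {x | f x ≤ c}, f x ∂μ) :
    μ (symmDiff Q (P ∩ {x | f x ≤ c})) = 0 := by
  set A := P ∩ {x | f x ≤ c}
  have hA : MeasurableSet A := hP.inter (measurableSet_le hf measurable_const)
  have hfin : ∀ {u}, u ⊆ P → μ u ≠ ∞ := fun hu ↦ ne_top_of_le_ne_top hμP (measure_mono hu)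
  have hsdiff : μ (Q \ A) = μ (A \ Q) := measure_sdiff_symm hQ.nullMeasurableSet
    hA.nullMeasurableSet hvol (hfin (inter_subset_left.trans hQP))
  have hint_sdiff : ∫ x in Q \ A, f x ∂μ ≤ ∫ x in A \ Q, f x ∂μ := by
    have hQ_split := integral_inter_add_sdiff hA (hfP.mono_set hQP)
    have hA_split := integral_inter_add_sdiff hQ (hfP.mono_set (inter_subset_left : A ⊆ P))
    rw [inter_comm] at hQ_split
    linarith
  have hQA : μ (Q \ A) = 0 :=
    measure_eq_zero_of_setIntegral_le_of_lt_of_le (hQ.diff hA) (hA.diff hQ) hsdiff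
      (hfin (sdiff_subset.trans inter_subset_left)) (hfP.mono_set (sdiff_subset.trans hQP))
      (hfP.mono_set (sdiff_subset.trans inter_subset_left))
      (fun x hx ↦ not_le.1 fun hle ↦ hx.2 ⟨hQP hx.1, hle⟩) (fun x hx ↦ hx.1.2) hint_sdiff
  rw [symmDiff_def]
  exact measure_union_null hQA (hsdiff ▸ hQA)

end MeasureTheory

theorem halfspace_maximizer_unique_general (n : ℕ) (P : Set (EuclideanSpace ℝ (Fin n)))
    (hPclosed : IsClosed P) (hPbdd : Bornology.IsBounded P)
    (v : EuclideanSpace ℝ (Fin n))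
    (c : ℝ)
    (hHzero : ∫ x in P ∩ {x | inner ℝ x v ≤ c}, (inner ℝ x v : ℝ) ∂volume = 0)
    (Q : Set (EuclideanSpace ℝ (Fin n))) (hQclosed : IsClosed Q) (hQP : Q ⊆ P)
    (hQzero : ∫ x in Q, (inner ℝ x v : ℝ) ∂volume = 0)
    (hQvol : volume Q = volume (P ∩ {x | inner ℝ x v ≤ c})) :
    volume (symmDiff Q (P ∩ {x | inner ℝ x v ≤ c})) = 0 := by
  have hPcompact : IsCompact P := Metric.isCompact_of_isClosed_isBounded hPclosed hPbdd
  have hf : Continuous fun x : EuclideanSpace ℝ (Fin n) ↦ inner ℝ x v :=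
    continuous_id.inner continuous_const
  exact measure_symmDiff_inter_sublevel_eq_zero hPclosed.measurableSet hQclosed.measurableSet
    hQP hf.measurable (hf.continuousOn.integrableOn_compact hPcompact)
    hPcompact.measure_lt_top.ne hQvol (hQzero.trans hHzero.symm).le

/-- Uniqueness in the half-space maximization: any closed `Q ⊆ P` satisfying the
constraint `∫_Q ⟪x,v⟫ dλ = 0` and having the same volume as the half-space truncation
`P ∩ {x | ⟪x,v⟫ ≤ c}` agrees with it up to a Lebesgue-null set. -/
theorem halfspace_maximizer_unique (n : ℕ) (P : Set (EuclideanSpace ℝ (Fin n)))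
    (hPclosed : IsClosed P) (hPmeas : MeasurableSet P) (hPbdd : Bornology.IsBounded P)
    (h0 : (0 : EuclideanSpace ℝ (Fin n)) ∈ interior P)
    (v : EuclideanSpace ℝ (Fin n))
    (hpos : 0 < ∫ x in P, (inner ℝ x v : ℝ) ∂(volume : Measure (EuclideanSpace ℝ (Fin n))))
    (c : ℝ)
    (hHzero : ∫ x in P ∩ {x | inner ℝ x v ≤ c}, (inner ℝ x v : ℝ) ∂volume = 0)
    (Q : Set (EuclideanSpace ℝ (Fin n))) (hQclosed : IsClosed Q) (hQP : Q ⊆ P)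
    (hQzero : ∫ x in Q, (inner ℝ x v : ℝ) ∂volume = 0)
    (hQvol : volume Q = volume (P ∩ {x | inner ℝ x v ≤ c})) :
    volume (symmDiff Q (P ∩ {x | inner ℝ x v ≤ c})) = 0 :=
  halfspace_maximizer_unique_general n P hPclosed hPbdd v c hHzero Q hQclosed hQP hQzero hQvol
end

section
/- For the polytope P = (4Δ₃ − 𝟏) \ (2Δ₃ − 𝟏) in ℝ³, the unique w ∈ (0, 2) solving (4−w)³((4−w)/4 − 1) − 2³(2/4 − 1) = 0 is w = (2/3)(5 − 4/(19 − 3√33)^{1/3} − (19 − 3√33)^{1/3}), and for this w one has (4−w)³ − 2³ < 54. -/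
open Real

private lemma gap_aux_bounds (t : ℝ) (ht0 : 0 < t) (ht3 : t ^ 3 = 12 * t + 38) :
    2 < t ∧ t < 4.6 := by
  constructor
  · nlinarith [sq_nonneg (t + 1)]
  · nlinarith [sq_nonneg (t + 2.3)]

private lemma gap_aux_uniq (w w' : ℝ) (hw0 : 0 < w) (hw2 : w < 2)
    (h'0 : 0 < w') (h'2 : w' < 2)
    (e : (4 - w) ^ 3 * ((4 - w) / 4 - 1) - 2 ^ 3 * (2 / 4 - 1) = 0)
    (e' : (4 - w') ^ 3 * ((4 - w') / 4 - 1) - 2 ^ 3 * (2 / 4 - 1) = 0) :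
    w' = w := by
  have key' : (w' - 2) * (w' ^ 3 - 10 * w' ^ 2 + 28 * w' - 8) = 0 := by
    linear_combination 4 * e'
  have hcub' : w' ^ 3 - 10 * w' ^ 2 + 28 * w' - 8 = 0 := by
    rcases mul_eq_zero.mp key' with h | h
    · linarith
    · exact h
  have keyw : (w - 2) * (w ^ 3 - 10 * w ^ 2 + 28 * w - 8) = 0 := by
    linear_combination 4 * e
  have hcubw : w ^ 3 - 10 * w ^ 2 + 28 * w - 8 = 0 := by
    rcases mul_eq_zero.mp keyw with h | h
    · linarith
    · exact h
  have hfac : (w' - w) * (w' ^ 2 + w' * w + w ^ 2 - 10 * w' - 10 * w + 28) = 0 := by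
    linear_combination hcub' - hcubw
  have hq : 0 < w' ^ 2 + w' * w + w ^ 2 - 10 * w' - 10 * w + 28 := by
    nlinarith [mul_pos (sub_pos.mpr h'2) (sub_pos.mpr hw2), sq_nonneg (w' - w)]
  rcases mul_eq_zero.mp hfac with h | h
  · linarith
  · exfalso; linarith

/-- The invariant computation for `ℙ³` blown up at one point: the unique
`w ∈ (0,2)` with `(4−w)³((4−w)/4 − 1) − 2³(2/4 − 1) = 0` is the explicit radical
expression, and for it `(4−w)³ − 2³ < 54`. -/
theorem gap_P3_blowup :
    let w : ℝ := (2 / 3) * (5 - 4 / (19 - 3 * Real.sqrt 33) ^ ((1 : ℝ) / 3)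
        - (19 - 3 * Real.sqrt 33) ^ ((1 : ℝ) / 3))
    w ∈ Set.Ioo (0 : ℝ) 2 ∧
    (4 - w) ^ 3 * ((4 - w) / 4 - 1) - 2 ^ 3 * (2 / 4 - 1) = 0 ∧
    (∀ w' ∈ Set.Ioo (0 : ℝ) 2,
      (4 - w') ^ 3 * ((4 - w') / 4 - 1) - 2 ^ 3 * (2 / 4 - 1) = 0 → w' = w) ∧
    (4 - w) ^ 3 - 2 ^ 3 < 54 := by
  intro w
  obtain ⟨t, ht0, ht3, hwt⟩ :
      ∃ t : ℝ, 0 < t ∧ t ^ 3 = 12 * t + 38 ∧ w = (2 / 3) * (5 - t) := by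
    have hs2 : (Real.sqrt 33) ^ 2 = 33 := Real.sq_sqrt (by norm_num)
    have hs0 : 0 < Real.sqrt 33 := Real.sqrt_pos.mpr (by norm_num)
    have ha : (0 : ℝ) < 19 - 3 * Real.sqrt 33 := by nlinarith
    have hc0 : 0 < (19 - 3 * Real.sqrt 33) ^ ((1 : ℝ) / 3) :=
      Real.rpow_pos_of_pos ha _
    have hcne : (19 - 3 * Real.sqrt 33) ^ ((1 : ℝ) / 3) ≠ 0 := ne_of_gt hc0
    have hc3 : ((19 - 3 * Real.sqrt 33) ^ ((1 : ℝ) / 3)) ^ 3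
        = 19 - 3 * Real.sqrt 33 := by
      rw [← Real.rpow_natCast ((19 - 3 * Real.sqrt 33) ^ ((1 : ℝ) / 3)) 3,
        ← Real.rpow_mul ha.le]
      norm_num
    have hc6 : ((19 - 3 * Real.sqrt 33) ^ ((1 : ℝ) / 3)) ^ 6
        = (19 - 3 * Real.sqrt 33) ^ 2 := by
      rw [show (6 : ℕ) = 3 * 2 from rfl, pow_mul, hc3]
    refine ⟨(19 - 3 * Real.sqrt 33) ^ ((1 : ℝ) / 3)
        + 4 / (19 - 3 * Real.sqrt 33) ^ ((1 : ℝ) / 3), by positivity, ?_, ?_⟩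
    · field_simp
      nlinarith [hc3, hc6, hs2]
    · show (2 / 3) * (5 - 4 / (19 - 3 * Real.sqrt 33) ^ ((1 : ℝ) / 3)
        - (19 - 3 * Real.sqrt 33) ^ ((1 : ℝ) / 3)) = _
      ring
  obtain ⟨ht2, ht46⟩ := gap_aux_bounds t ht0 ht3
  have hwlo : 0 < w := by rw [hwt]; linarith
  have hwhi : w < 2 := by rw [hwt]; linarith
  have heqw : (4 - w) ^ 3 * ((4 - w) / 4 - 1) - 2 ^ 3 * (2 / 4 - 1) = 0 := by
    rw [hwt]
    linear_combination (4 / 81 : ℝ) * (t - 2) * ht3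
  refine ⟨⟨hwlo, hwhi⟩, heqw, ?_, ?_⟩
  · intro w' hw' heq
    exact gap_aux_uniq w w' hwlo hwhi hw'.1 hw'.2 heqw heq
  · rw [hwt]
    nlinarith [ht2, ht46, sq_nonneg t]
end

section
/- For the polytope P = (5Δ₃ − 𝟏) \ (Δ₃ − 𝟏) in ℝ³, the unique w ∈ (0, 4) solving (5−w)³((5−w)/4 − 1) − 1·(1/4 − 1) = 0 is w = 4 − (4/(2−√2))^{1/3} − (2(2−√2))^{1/3}, and for this w one has (1/2)((5−w)³ − 1) < 54. -/
open Real

/-- The invariant computation for `ℙ(𝒪⊕𝒪(2))`: the unique `w ∈ (0,4)` with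
`(5−w)³((5−w)/4 − 1) − 1·(1/4 − 1) = 0` is the explicit radical expression, and
for it `(1/2)((5−w)³ − 1) < 54`. -/
theorem gap_P_O_O2 :
    let w : ℝ := 4 - (4 / (2 - Real.sqrt 2)) ^ ((1 : ℝ) / 3)
        - (2 * (2 - Real.sqrt 2)) ^ ((1 : ℝ) / 3)
    w ∈ Set.Ioo (0 : ℝ) 4 ∧
    (5 - w) ^ 3 * ((5 - w) / 4 - 1) - 1 * (1 / 4 - 1) = 0 ∧
    (∀ w' ∈ Set.Ioo (0 : ℝ) 4,
      (5 - w') ^ 3 * ((5 - w') / 4 - 1) - 1 * (1 / 4 - 1) = 0 → w' = w) ∧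
    (1 / 2) * ((5 - w) ^ 3 - 1) < 54 := by
  have h2 : Real.sqrt 2 ^ 2 = 2 := Real.sq_sqrt (by norm_num)
  have hs0 : (0:ℝ) ≤ Real.sqrt 2 := Real.sqrt_nonneg 2
  have hslt : Real.sqrt 2 < 2 := by nlinarith
  have hpos : (0:ℝ) < 2 - Real.sqrt 2 := by linarith
  set a : ℝ := (4 / (2 - Real.sqrt 2)) ^ ((1:ℝ)/3) with ha_def
  set b : ℝ := (2 * (2 - Real.sqrt 2)) ^ ((1:ℝ)/3) with hb_def
  have hbase1 : (0:ℝ) ≤ 4 / (2 - Real.sqrt 2) := by positivity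
  have hbase2 : (0:ℝ) ≤ 2 * (2 - Real.sqrt 2) := by positivity
  have ha : 0 < a := Real.rpow_pos_of_pos (by positivity) _
  have hb : 0 < b := Real.rpow_pos_of_pos (by positivity) _
  have ha3 : a ^ 3 = 4 / (2 - Real.sqrt 2) := by
    rw [ha_def, ← Real.rpow_natCast _ 3, ← Real.rpow_mul hbase1]
    norm_num
  have hb3 : b ^ 3 = 2 * (2 - Real.sqrt 2) := by
    rw [hb_def, ← Real.rpow_natCast _ 3, ← Real.rpow_mul hbase2]
    norm_num
  have hab : a * b = 2 := by
    rw [ha_def, hb_def, ← Real.mul_rpow hbase1 hbase2]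
    have h8 : 4 / (2 - Real.sqrt 2) * (2 * (2 - Real.sqrt 2)) = 8 := by
      field_simp
      ring
    rw [h8, show (8:ℝ) = 2 ^ (3:ℕ) by norm_num, ← Real.rpow_natCast 2 3,
      ← Real.rpow_mul (by norm_num : (0:ℝ) ≤ 2)]
    norm_num
  have hsum : a ^ 3 + b ^ 3 = 8 := by
    rw [ha3, hb3]
    field_simp
    linear_combination 2 * h2
  have hu : (a + b) ^ 3 = 6 * (a + b) + 8 := by
    linear_combination hsum + (3 * (a + b)) * hab
  have hu2 : 2 < a + b := by
    by_contra h
    push_neg at h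
    nlinarith [hu, mul_pos ha hb, sq_nonneg (a + b)]
  have hu4 : a + b < 4 := by
    by_contra h
    push_neg at h
    nlinarith [hu]
  intro w
  have hw : w = 4 - a - b := rfl
  rw [hw]
  refine ⟨⟨by linarith, by linarith⟩, ?_, ?_, ?_⟩
  · linear_combination ((a + b) / 4) * hu
  · intro w' hw' heq
    have hu'pos : 0 < 4 - w' := by linarith [hw'.2]
    have h4 : (4 - w') * ((4 - w') ^ 3 - 6 * (4 - w') - 8) = 0 := by
      linear_combination 4 * heq
    have hc : (4 - w') ^ 3 = 6 * (4 - w') + 8 := by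
      rcases mul_eq_zero.mp h4 with h | h
      · linarith
      · linarith
    have hu'2 : 2 < 4 - w' := by
      by_contra h
      push_neg at h
      nlinarith [hc, sq_nonneg (4 - w')]
    have hfac : (4 - w' - (a + b)) * ((4 - w') ^ 2 + (4 - w') * (a + b) + (a + b) ^ 2 - 6) = 0 := by
      linear_combination hc - hu
    rcases mul_eq_zero.mp hfac with h | h
    · linarith
    · nlinarith [h, mul_lt_mul'' hu'2 hu2 (by norm_num) (by norm_num)]
  · nlinarith [hu, mul_pos (sub_pos.mpr hu4) (sub_pos.mpr hu2)]
end
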